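/- Let Γ be a simple graph of order n, size m and minimum degree δ, and let r ≥ 2 be an integer. If k > (2m − r(r−1)(δ+2))/(n + r(r−1)) or k > 2(m − r²(r−1))/(n + 2r(r−1)), then Γ cannot be partitioned into r global defensive k-alliances. -/

import Mathlib

open Finset

/-- The number of neighbors that the vertex `v` has inside the set `S`. -/
def degIn {V : Type*} [Fintype V] [DecidableEq V] (G : SimpleGraph V) [DecidableRel G.Adj]
    (S : Finset V) (v : V) : ℕ :=
  (S.filter fun u => G.Adj v u).card

/-- `S` is a defensive `k`-alliance: `S` is nonempty and every vertex of `S` has at least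
`k` more neighbors inside `S` than outside. -/
def IsDefensiveAlliance {V : Type*} [Fintype V] [DecidableEq V] (G : SimpleGraph V)
    [DecidableRel G.Adj] (k : ℤ) (S : Finset V) : Prop :=
  S.Nonempty ∧ ∀ v ∈ S, (degIn G Sᶜ v : ℤ) + k ≤ (degIn G S v : ℤ)

/-- `S` is a dominating set: every vertex outside `S` has a neighbor in `S`. -/
def IsDominatingSet {V : Type*} [Fintype V] [DecidableEq V] (G : SimpleGraph V)
    (S : Finset V) : Prop :=
  ∀ v ∉ S, ∃ u ∈ S, G.Adj v u

/-- A global defensive `k`-alliance is a defensive `k`-alliance which is a dominating set. -/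
def IsGlobalDefensiveAlliance {V : Type*} [Fintype V] [DecidableEq V] (G : SimpleGraph V)
    [DecidableRel G.Adj] (k : ℤ) (S : Finset V) : Prop :=
  IsDefensiveAlliance G k S ∧ IsDominatingSet G S

/-- The defensive `k`-alliance number: the minimum cardinality of a defensive `k`-alliance. -/
noncomputable def defAllianceNum {V : Type*} [Fintype V] [DecidableEq V] (G : SimpleGraph V)
    [DecidableRel G.Adj] (k : ℤ) : ℕ :=
  sInf {s : ℕ | ∃ S : Finset V, IsDefensiveAlliance G k S ∧ S.card = s}

/-- The global defensive `k`-alliance number. -/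
noncomputable def globalDefAllianceNum {V : Type*} [Fintype V] [DecidableEq V] (G : SimpleGraph V)
    [DecidableRel G.Adj] (k : ℤ) : ℕ :=
  sInf {s : ℕ | ∃ S : Finset V, IsGlobalDefensiveAlliance G k S ∧ S.card = s}

/-- A partition of the vertex set all whose parts are defensive `k`-alliances. -/
def IsDefAlliancePartition {V : Type*} [Fintype V] [DecidableEq V] (G : SimpleGraph V)
    [DecidableRel G.Adj] (k : ℤ) (P : Finpartition (univ : Finset V)) : Prop :=
  ∀ S ∈ P.parts, IsDefensiveAlliance G k S

/-- A partition of the vertex set all whose parts are global defensive `k`-alliances. -/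
def IsGlobalDefAlliancePartition {V : Type*} [Fintype V] [DecidableEq V] (G : SimpleGraph V)
    [DecidableRel G.Adj] (k : ℤ) (P : Finpartition (univ : Finset V)) : Prop :=
  ∀ S ∈ P.parts, IsGlobalDefensiveAlliance G k S

/-- The defensive `k`-alliance partition number `ψₖᵈ`. -/
noncomputable def defPartitionNum {V : Type*} [Fintype V] [DecidableEq V] (G : SimpleGraph V)
    [DecidableRel G.Adj] (k : ℤ) : ℕ :=
  sSup {r : ℕ | ∃ P : Finpartition (univ : Finset V),
    IsDefAlliancePartition G k P ∧ P.parts.card = r}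

/-- The global defensive `k`-alliance partition number `ψₖᵍᵈ`. -/
noncomputable def globalDefPartitionNum {V : Type*} [Fintype V] [DecidableEq V]
    (G : SimpleGraph V) [DecidableRel G.Adj] (k : ℤ) : ℕ :=
  sSup {r : ℕ | ∃ P : Finpartition (univ : Finset V),
    IsGlobalDefAlliancePartition G k P ∧ P.parts.card = r}

/-!
Let `P` be a partition of the vertex set into `r` global defensive `k`-alliances. A vertex `v`
of a part `S` is dominated into each of the other `r - 1` parts, so it has at least `r - 1`
neighbours outside `S`, hence at least `r - 1 + k` inside `S`. This gives
`deg v ≥ 2 (r - 1) + k` and `|S| ≥ r + k`, and, since `deg v ≤ 2 δ_S(v) - k` and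
`δ_S(v) < |S|`, also `2 |S| ≥ δ + k + 2`. Summing `deg v ≥ 2 (r - 1) + k` over all vertices
and distributing `2 (r - 1) n = ∑_S 2 (r - 1) |S|` over the parts, either lower bound on `|S|`
turns into one of the two lower bounds on `2 m` that contradict the hypotheses on `k`.
-/

section

variable {V : Type*} [Fintype V] [DecidableEq V] {G : SimpleGraph V} [DecidableRel G.Adj]

theorem degIn_add_degIn_compl (S : Finset V) (v : V) :
    degIn G S v + degIn G Sᶜ v = G.degree v := by
  rw [degIn, degIn, ← card_union_of_disjoint (disjoint_filter_filter disjoint_compl_right),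
    ← filter_union, union_compl, ← G.card_neighborFinset_eq_degree, G.neighborFinset_eq_filter]

theorem degIn_lt_card {S : Finset V} {v : V} (hv : v ∈ S) : degIn G S v < #S :=
  card_lt_card (filter_ssubset.2 ⟨v, hv, G.irrefl⟩)

theorem card_parts_le_degIn_compl_add_one {P : Finpartition (univ : Finset V)}
    (hdom : ∀ T ∈ P.parts, IsDominatingSet G T) {S : Finset V} (hS : S ∈ P.parts) {v : V}
    (hv : v ∈ S) : #P.parts ≤ degIn G Sᶜ v + 1 := by
  have hsurj : Set.SurjOn P.part (Sᶜ.filter fun u => G.Adj v u) (P.parts.erase S) := by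
    intro T hT
    obtain ⟨hTS, hT⟩ := mem_erase.1 hT
    obtain ⟨u, huT, hvu⟩ := hdom T hT v fun hvT => hTS (P.eq_of_mem_parts hT hS hvT hv)
    have huS : u ∉ S := fun huS => hTS (P.eq_of_mem_parts hT hS huT huS)
    exact ⟨u, mem_filter.2 ⟨mem_compl.2 huS, hvu⟩, P.part_eq_of_mem hT huT⟩
  have hcard := card_le_card_of_surjOn P.part hsurj
  rw [card_erase_of_mem hS] at hcard
  rw [degIn]
  omega

namespace IsGlobalDefAlliancePartition

variable {k : ℤ} {P : Finpartition (univ : Finset V)} {S : Finset V} {v : V}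

theorem card_parts_sub_one_add_le_degIn (hP : IsGlobalDefAlliancePartition G k P)
    (hS : S ∈ P.parts) (hv : v ∈ S) : (#P.parts : ℤ) - 1 + k ≤ degIn G S v := by
  have hout := card_parts_le_degIn_compl_add_one (fun T hT => (hP T hT).2) hS hv
  have hdef := (hP S hS).1.2 v hv
  omega

theorem card_parts_add_le_card (hP : IsGlobalDefAlliancePartition G k P) (hS : S ∈ P.parts)
    (hv : v ∈ S) : (#P.parts : ℤ) + k ≤ #S := by
  have := hP.card_parts_sub_one_add_le_degIn hS hv
  have := degIn_lt_card (G := G) hv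
  omega

theorem minDegree_add_two_add_le_two_mul_card (hP : IsGlobalDefAlliancePartition G k P)
    (hS : S ∈ P.parts) (hv : v ∈ S) : (G.minDegree : ℤ) + k + 2 ≤ 2 * #S := by
  have hdef := (hP S hS).1.2 v hv
  have hsplit := degIn_add_degIn_compl (G := G) S v
  have := degIn_lt_card (G := G) hv
  have := G.minDegree_le_degree v
  omega

theorem two_mul_card_parts_sub_one_add_le_degree (hP : IsGlobalDefAlliancePartition G k P)
    (v : V) : 2 * ((#P.parts : ℤ) - 1) + k ≤ G.degree v := by
  have hS : P.part v ∈ P.parts := P.part_mem.2 (mem_univ v)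
  have hv : v ∈ P.part v := P.mem_part (mem_univ v)
  have hdef := (hP _ hS).1.2 v hv
  have hout := card_parts_le_degIn_compl_add_one (fun T hT => (hP T hT).2) hS hv
  have hsplit := degIn_add_degIn_compl (G := G) (P.part v) v
  omega

theorem card_parts_mul_add_le_two_mul_card_edges (hP : IsGlobalDefAlliancePartition G k P)
    (c : ℤ) (hc : ∀ S ∈ P.parts, c ≤ 2 * ((#P.parts : ℤ) - 1) * #S) :
    #P.parts * c + k * Fintype.card V ≤ 2 * #G.edgeFinset := by
  have hparts : ∑ S ∈ P.parts, (#S : ℤ) = Fintype.card V := by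
    exact_mod_cast P.sum_card_parts
  calc (#P.parts : ℤ) * c + k * Fintype.card V
      = ∑ _S ∈ P.parts, c + k * Fintype.card V := by rw [sum_const, nsmul_eq_mul]
    _ ≤ ∑ S ∈ P.parts, 2 * ((#P.parts : ℤ) - 1) * #S + k * Fintype.card V := by
        gcongr with S hS
        exact hc S hS
    _ = ∑ _v : V, (2 * ((#P.parts : ℤ) - 1) + k) := by
        rw [← mul_sum, hparts, sum_const, card_univ, nsmul_eq_mul]
        ring
    _ ≤ ∑ v : V, (G.degree v : ℤ) :=
        sum_le_sum fun v _ => hP.two_mul_card_parts_sub_one_add_le_degree v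
    _ = 2 * #G.edgeFinset := by exact_mod_cast G.sum_degrees_eq_twice_card_edges

end IsGlobalDefAlliancePartition

end

theorem statement8_general {V : Type*} [Fintype V] [DecidableEq V]
    (G : SimpleGraph V) [DecidableRel G.Adj] (k : ℤ) (r : ℕ) (hr : 2 ≤ r)
    (h : (k : ℚ) > (2 * (G.edgeFinset.card : ℚ) - (r : ℚ) * ((r : ℚ) - 1) *
            ((G.minDegree : ℚ) + 2)) / ((Fintype.card V : ℚ) + (r : ℚ) * ((r : ℚ) - 1)) ∨
         (k : ℚ) > 2 * ((G.edgeFinset.card : ℚ) - (r : ℚ) ^ 2 * ((r : ℚ) - 1)) /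
            ((Fintype.card V : ℚ) + 2 * (r : ℚ) * ((r : ℚ) - 1))) :
    ¬ ∃ P : Finpartition (univ : Finset V),
        IsGlobalDefAlliancePartition G k P ∧ P.parts.card = r := by
  rintro ⟨P, hP, rfl⟩
  have hr1 : (0 : ℤ) ≤ #P.parts - 1 := by omega
  have hrQ : (2 : ℚ) ≤ #P.parts := by exact_mod_cast hr
  rcases h with h | h
  · have key := hP.card_parts_mul_add_le_two_mul_card_edges
      ((#P.parts - 1) * (G.minDegree + k + 2)) fun S hS => by
        obtain ⟨v, hv⟩ := (hP S hS).1.1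
        nlinarith [hP.minDegree_add_two_add_le_two_mul_card hS hv]
    rw [gt_iff_lt, div_lt_iff₀ (by nlinarith)] at h
    qify at key
    nlinarith
  · have key := hP.card_parts_mul_add_le_two_mul_card_edges
      (2 * (#P.parts - 1) * (#P.parts + k)) fun S hS => by
        obtain ⟨v, hv⟩ := (hP S hS).1.1
        nlinarith [hP.card_parts_add_le_card hS hv]
    rw [gt_iff_lt, div_lt_iff₀ (by nlinarith)] at h
    qify at key
    nlinarith

/-- If `k > (2m - r(r-1)(δ+2))/(n + r(r-1))` or `k > 2(m - r²(r-1))/(n + 2r(r-1))`, then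
`Γ` cannot be partitioned into `r ≥ 2` global defensive `k`-alliances. -/
theorem statement8 {V : Type*} [Fintype V] [DecidableEq V] [Nonempty V]
    (G : SimpleGraph V) [DecidableRel G.Adj] (k : ℤ) (r : ℕ) (hr : 2 ≤ r)
    (h : (k : ℚ) > (2 * (G.edgeFinset.card : ℚ) - (r : ℚ) * ((r : ℚ) - 1) *
            ((G.minDegree : ℚ) + 2)) / ((Fintype.card V : ℚ) + (r : ℚ) * ((r : ℚ) - 1)) ∨
         (k : ℚ) > 2 * ((G.edgeFinset.card : ℚ) - (r : ℚ) ^ 2 * ((r : ℚ) - 1)) /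
            ((Fintype.card V : ℚ) + 2 * (r : ℚ) * ((r : ℚ) - 1))) :
    ¬ ∃ P : Finpartition (univ : Finset V),
        IsGlobalDefAlliancePartition G k P ∧ P.parts.card = r :=
  statement8_general G k r hr h
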